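/- Equivalence of minima: for any probability distribution ρ over 𝒳 × 𝒴 with 𝒳 a finite set of prompts, the minimal expected negative log-likelihood of ARMs over all q equals the minimal expected negative log-likelihood of EBMs over all decomposable rewards r, which in turn equals the minimal expected negative log-likelihood of EBMs over all sequence-level rewards R : 𝒳 × 𝒴 → ℝ; that is, min_q L^ARM(q) = min_r L^EBM(R_r) = min_R L^EBM(R). -/
import Mathlib


open Finset

/-! Prompts in a finite set `X`; contexts are a prompt together with fewer than `T`
appended vocabulary tokens; finished responses are such token prefixes followed by
`EOS` (encoded as `none : Option V`). -/

/-- Vocabulary part of a finished response (the response is this prefix followed by EOS). -/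
abbrev Resp (V : Type) (T : ℕ) := Σ t : Fin T, Fin (t : ℕ) → V

/-- Contexts: a prompt extended by fewer than `T` vocabulary tokens. -/
abbrev Ctx (X V : Type) (T : ℕ) := X × Resp V T

/-- Admissible next tokens at a context: only `EOS` (= `none`) at maximal contexts. -/
def adm (X V : Type) [Fintype V] (T : ℕ) (s : Ctx X V T) : Finset (Option V) :=
  if (s.2.1 : ℕ) + 1 = T then {none} else Finset.univ

/-- Soft value `V_q(s) = log ∑_{j admissible at s} exp q(s, j)`. -/
noncomputable def Vq (X V : Type) [Fintype V] (T : ℕ)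
    (q : Ctx X V T × Option V → ℝ) (s : Ctx X V T) : ℝ :=
  Real.log (∑ a ∈ adm X V T s, Real.exp (q (s, a)))

/-- Next-token policy `π_q(j | s) = exp (q(s,j) - V_q(s))`. -/
noncomputable def piq (X V : Type) [Fintype V] (T : ℕ)
    (q : Ctx X V T × Option V → ℝ) (s : Ctx X V T) (a : Option V) : ℝ :=
  Real.exp (q (s, a) - Vq X V T q s)

/-- The strict prefix of length `i` of a finished response `y`. -/
def pref (V : Type) (T : ℕ) (y : Resp V T) (i : Fin (y.1 : ℕ)) : Resp V T :=
  ⟨⟨(i : ℕ), lt_trans i.isLt y.1.isLt⟩, fun j => y.2 (Fin.castLE (le_of_lt i.isLt) j)⟩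

/-- The mapping `M` (backward recursion), as a function of the depth of the context. -/
noncomputable def Mgo (X V : Type) [Fintype V] (T : ℕ) (r : Ctx X V T × Option V → ℝ)
    (x : X) (t : ℕ) (ht : t < T) (s : Fin t → V) (a : Option V) : ℝ :=
  match a with
  | none => r ((x, ⟨⟨t, ht⟩, s⟩), none)
  | some v =>
    r ((x, ⟨⟨t, ht⟩, s⟩), some v) +
      if h : t + 1 < T then
        Real.log (∑ b ∈ adm X V T (x, ⟨⟨t + 1, h⟩, Fin.snoc s v⟩),
          Real.exp (Mgo X V T r x (t + 1) h (Fin.snoc s v) b))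
      else 0
termination_by T - t
decreasing_by omega

/-- The mapping `q = M(r)`: `q(s, EOS) = r(s, EOS)` and
`q(s, y) = r(s, y) + V_q(s ⊕ y)` for a vocabulary token `y`. -/
noncomputable def Mmap (X V : Type) [Fintype V] (T : ℕ)
    (r : Ctx X V T × Option V → ℝ) : Ctx X V T × Option V → ℝ :=
  fun p => Mgo X V T r p.1.1 (p.1.2.1 : ℕ) p.1.2.1.isLt p.1.2.2 p.2

/-- Autoregressive probability `p^ARM_q(y | x)` of the finished response `y ⊕ EOS`. -/
noncomputable def pARM (X V : Type) [Fintype V] (T : ℕ)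
    (q : Ctx X V T × Option V → ℝ) (x : X) (y : Resp V T) : ℝ :=
  (∏ i : Fin (y.1 : ℕ), piq X V T q (x, pref V T y i) (some (y.2 i))) *
    piq X V T q (x, y) none

/-- Negative log-likelihood of the ARM. -/
noncomputable def lARM (X V : Type) [Fintype V] (T : ℕ)
    (q : Ctx X V T × Option V → ℝ) (x : X) (y : Resp V T) : ℝ :=
  - Real.log (pARM X V T q x y)

/-- Sequence-level log-partition `A^EBM_R(x)` of a sequence-level reward `R`. -/
noncomputable def Aebm (X V : Type) [Fintype V] (T : ℕ)
    (R : X × Resp V T → ℝ) (x : X) : ℝ :=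
  Real.log (∑ y : Resp V T, Real.exp (R (x, y)))

/-- Negative log-likelihood `ℓ^EBM_R(x, y) = A^EBM_R(x) - R(x, y)` of the EBM. -/
noncomputable def lEBM (X V : Type) [Fintype V] (T : ℕ)
    (R : X × Resp V T → ℝ) (x : X) (y : Resp V T) : ℝ :=
  Aebm X V T R x - R (x, y)

/-- Decomposable sequence-level reward `R_r(x, y) = ∑_t r(x ⊕ y_{<t}, y_t)`. -/
noncomputable def Rr (X V : Type) [Fintype V] (T : ℕ)
    (r : Ctx X V T × Option V → ℝ) : X × Resp V T → ℝ :=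
  fun p =>
    (∑ i : Fin (p.2.1 : ℕ), r ((p.1, pref V T p.2 i), some (p.2.2 i))) + r ((p.1, p.2), none)

/-- Expected ARM risk under the data distribution `ρ`. -/
noncomputable def LARM (X V : Type) [Fintype X] [Fintype V] (T : ℕ)
    (ρ : X × Resp V T → ℝ) (q : Ctx X V T × Option V → ℝ) : ℝ :=
  ∑ p : X × Resp V T, ρ p * lARM X V T q p.1 p.2

/-- Expected EBM risk under the data distribution `ρ`. -/
noncomputable def LEBM (X V : Type) [Fintype X] [Fintype V] (T : ℕ)
    (ρ : X × Resp V T → ℝ) (R : X × Resp V T → ℝ) : ℝ :=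
  ∑ p : X × Resp V T, ρ p * lEBM X V T R p.1 p.2
section
variable (X V : Type) [Fintype V] (T : ℕ)

lemma adm_nonempty (s : Ctx X V T) : (adm X V T s).Nonempty := by
  unfold adm; split <;> simp

lemma rowsum (q : Ctx X V T × Option V → ℝ) (s : Ctx X V T) :
    ∑ a ∈ adm X V T s, piq X V T q s a = 1 := by
  have hpos : 0 < ∑ a ∈ adm X V T s, Real.exp (q (s, a)) :=
    Finset.sum_pos (fun a _ => Real.exp_pos _) (adm_nonempty X V T s)
  unfold piq Vq
  simp only [Real.exp_sub, Real.exp_log hpos, ← Finset.sum_div]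
  field_simp

omit [Fintype V] in
lemma snoc_lt {t : ℕ} (s : Fin t → V) (v : V) (j : Fin (t + 1)) (h : (j : ℕ) < t) :
    Fin.snoc (α := fun _ => V) s v j = s ⟨j, h⟩ := by
  simp only [Fin.snoc, h, dif_pos, cast_eq]
  rfl


lemma Mgo_none (r : Ctx X V T × Option V → ℝ) (x : X) (t : ℕ) (ht : t < T) (s : Fin t → V) :
    Mgo X V T r x t ht s none = r ((x, ⟨⟨t, ht⟩, s⟩), none) := by
  rw [Mgo]

lemma Mgo_some (r : Ctx X V T × Option V → ℝ) (x : X) (t : ℕ) (ht : t < T) (s : Fin t → V)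
    (v : V) (h : t + 1 < T) :
    Mgo X V T r x t ht s (some v) = r ((x, ⟨⟨t, ht⟩, s⟩), some v) +
      Vq X V T (Mmap X V T r) (x, ⟨⟨t + 1, h⟩, Fin.snoc s v⟩) := by
  rw [Mgo]
  simp only [h, dif_pos]
  rfl

noncomputable def W (q : Ctx X V T × Option V → ℝ) (x : X) (t : ℕ) : ℝ :=
  if ht : t < T then
    ∑ s : Fin t → V, ∏ i : Fin t,
      piq X V T q (x, ⟨⟨(i : ℕ), i.isLt.trans ht⟩, fun j => s (Fin.castLE i.isLt.le j)⟩)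
        (some (s i))
  else 0

lemma W_zero (q : Ctx X V T × Option V → ℝ) (x : X) (h : 0 < T) : W X V T q x 0 = 1 := by
  rw [W, dif_pos h]
  simp

lemma W_succ (q : Ctx X V T × Option V → ℝ) (x : X) (t : ℕ) (h : t + 1 < T) :
    W X V T q x (t + 1) = ∑ s : Fin t → V,
      (∏ i : Fin t,
        piq X V T q (x, ⟨⟨(i : ℕ), i.isLt.trans (Nat.lt_of_succ_lt h)⟩,
          fun j => s (Fin.castLE i.isLt.le j)⟩) (some (s i))) *
      ∑ v : V, piq X V T q (x, ⟨⟨t, Nat.lt_of_succ_lt h⟩, s⟩) (some v) := by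
  rw [W, dif_pos h]
  rw [← Equiv.sum_comp (Fin.snocEquiv (fun _ => V))]
  rw [Fintype.sum_prod_type]
  rw [Finset.sum_comm]
  refine Finset.sum_congr rfl fun s _ => ?_
  rw [Finset.mul_sum]
  refine Finset.sum_congr rfl fun v _ => ?_
  have hsnoc : ∀ p : V × (Fin t → V), (Fin.snocEquiv (fun _ => V)) p = Fin.snoc (α := fun _ => V) p.2 p.1 := fun _ => rfl
  rw [hsnoc]
  rw [Fin.prod_univ_castSucc]
  congr 1
  · refine Finset.prod_congr rfl fun k _ => ?_
    have h1 : Fin.snoc (α := fun _ => V) s v (Fin.castSucc k) = s k := by simp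
    have h2 : (fun j : Fin ((Fin.castSucc k : ℕ)) =>
        Fin.snoc (α := fun _ => V) s v (Fin.castLE (Fin.castSucc k).isLt.le j)) =
        (fun j => s (Fin.castLE k.isLt.le j)) := by
      funext j
      rw [snoc_lt V s v _ (show ((Fin.castLE (Fin.castSucc k).isLt.le j : Fin (t+1)) : ℕ) < t from j.isLt.trans k.isLt)]
      rfl
    rw [h2, h1]
    rfl
  · have h1 : Fin.snoc (α := fun _ => V) s v (Fin.last t) = v := by simp
    have h2 : (fun j : Fin ((Fin.last t : ℕ)) =>
        Fin.snoc (α := fun _ => V) s v (Fin.castLE (Fin.last t).isLt.le j)) = s := by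
      funext j
      rw [snoc_lt V s v _ (show ((Fin.castLE (Fin.last t).isLt.le j : Fin (t+1)) : ℕ) < t from j.isLt)]
      rfl
    rw [h2, h1]
    rfl

end
section
variable (X V : Type) [Fintype V] (T : ℕ)

lemma piq_none_max (q : Ctx X V T × Option V → ℝ) (s : Ctx X V T) (h : (s.2.1 : ℕ) + 1 = T) :
    piq X V T q s none = 1 := by
  have := rowsum X V T q s
  rwa [adm, if_pos h, Finset.sum_singleton] at this

lemma piq_none_nonmax (q : Ctx X V T × Option V → ℝ) (s : Ctx X V T) (h : ¬ (s.2.1 : ℕ) + 1 = T) :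
    piq X V T q s none = 1 - ∑ v : V, piq X V T q s (some v) := by
  have h2 := rowsum X V T q s
  rw [adm, if_neg h, Fintype.sum_option] at h2
  linarith

lemma W_top (q : Ctx X V T × Option V → ℝ) (x : X) (t : ℕ) (h : ¬ t < T) :
    W X V T q x t = 0 := by rw [W, dif_neg h]

lemma treesum (q : Ctx X V T × Option V → ℝ) (hT : 1 ≤ T) (x : X) :
    ∑ y : Resp V T, pARM X V T q x y = 1 := by
  obtain ⟨T', rfl⟩ : ∃ n, T = n + 1 := ⟨T - 1, by omega⟩
  have hsig : ∑ y : Resp V (T' + 1), pARM X V (T' + 1) q x y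
      = ∑ t : Fin (T' + 1), ∑ s : Fin (t : ℕ) → V, pARM X V (T' + 1) q x ⟨t, s⟩ := by
    rw [← Finset.univ_sigma_univ, Finset.sum_sigma]
  have key : ∀ t : Fin (T' + 1), ∑ s : Fin (t : ℕ) → V, pARM X V (T' + 1) q x ⟨t, s⟩
      = W X V (T' + 1) q x (t : ℕ) - W X V (T' + 1) q x ((t : ℕ) + 1) := by
    intro t
    set P : (Fin (t : ℕ) → V) → ℝ := fun s => ∏ i : Fin (t : ℕ),
      piq X V (T' + 1) q
        (x, ⟨⟨(i : ℕ), i.isLt.trans t.isLt⟩, fun j => s (Fin.castLE i.isLt.le j)⟩)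
        (some (s i)) with hP
    have hpa : ∀ s : Fin (t : ℕ) → V,
        pARM X V (T' + 1) q x ⟨t, s⟩ = P s * piq X V (T' + 1) q (x, ⟨t, s⟩) none := fun s => rfl
    have hW1 : W X V (T' + 1) q x (t : ℕ) = ∑ s : Fin (t : ℕ) → V, P s := by
      rw [W, dif_pos t.isLt]
    rcases Nat.lt_or_ge ((t : ℕ) + 1) (T' + 1) with h2 | h2
    · have hW2 : W X V (T' + 1) q x ((t : ℕ) + 1) = ∑ s : Fin (t : ℕ) → V,
          P s * ∑ v : V, piq X V (T' + 1) q (x, ⟨⟨(t : ℕ), t.isLt⟩, s⟩) (some v) := by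
        rw [W_succ X V (T' + 1) q x (t : ℕ) h2]
      rw [hW1, hW2, ← Finset.sum_sub_distrib]
      refine Finset.sum_congr rfl fun s _ => ?_
      rw [hpa, piq_none_nonmax X V (T' + 1) q (x, ⟨t, s⟩) (by simpa using Nat.ne_of_lt h2)]
      have : piq X V (T' + 1) q (x, ⟨⟨(t : ℕ), t.isLt⟩, s⟩) = piq X V (T' + 1) q (x, ⟨t, s⟩) :=
        rfl
      rw [this]
      ring
    · have htop : (t : ℕ) = T' := by omega
      have hW2 : W X V (T' + 1) q x ((t : ℕ) + 1) = 0 := W_top _ _ _ _ _ _ (by omega)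
      rw [hW1, hW2, sub_zero]
      refine Finset.sum_congr rfl fun s _ => ?_
      rw [hpa, piq_none_max X V (T' + 1) q (x, ⟨t, s⟩) (by simp [htop]),
        mul_one]
  rw [hsig, Finset.sum_congr rfl fun t _ => key t]
  rw [Fin.sum_univ_eq_sum_range (fun n => W X V (T' + 1) q x n - W X V (T' + 1) q x (n + 1))]
  rw [Finset.sum_range_sub' (fun n => W X V (T' + 1) q x n)]
  rw [W_zero X V (T' + 1) q x (by omega), W_top X V (T' + 1) q x (T' + 1) (by omega), sub_zero]

end
section
variable (X V : Type) [Fintype V] (T : ℕ)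

lemma pARM_exp (q : Ctx X V T × Option V → ℝ) (x : X) (y : Resp V T) :
    pARM X V T q x y = Real.exp
      ((∑ i : Fin (y.1 : ℕ),
          (q ((x, pref V T y i), some (y.2 i)) - Vq X V T q (x, pref V T y i)))
        + (q ((x, y), none) - Vq X V T q (x, y))) := by
  rw [Real.exp_add, Real.exp_sum]
  rfl

lemma dir1 (q : Ctx X V T × Option V → ℝ) (hT : 1 ≤ T) (x : X) (y : Resp V T) :
    lEBM X V T (Rr X V T (fun p => q p - Vq X V T q p.1)) x y = lARM X V T q x y := by
  have hRr : ∀ y' : Resp V T,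
      Real.exp (Rr X V T (fun p => q p - Vq X V T q p.1) (x, y')) = pARM X V T q x y' := by
    intro y'
    rw [pARM_exp]
    rfl
  have hA : Aebm X V T (Rr X V T (fun p => q p - Vq X V T q p.1)) x = 0 := by
    rw [Aebm, Finset.sum_congr rfl fun y' _ => hRr y', treesum X V T q hT x, Real.log_one]
  rw [lEBM, hA, lARM, zero_sub]
  congr 1
  rw [← Real.log_exp (Rr X V T (fun p => q p - Vq X V T q p.1) (x, y)), hRr]

/-- Telescoping potential. -/
noncomputable def Ftel (r : Ctx X V T × Option V → ℝ) (x : X) (y : Resp V T) (i : ℕ) : ℝ :=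
  if h : i ≤ (y.1 : ℕ) then
    Vq X V T (Mmap X V T r)
      (x, ⟨⟨i, lt_of_le_of_lt h y.1.isLt⟩, fun j => y.2 ⟨(j : ℕ), lt_of_lt_of_le j.isLt h⟩⟩)
  else 0

lemma telescope (r : Ctx X V T × Option V → ℝ) (hT : 1 ≤ T) (x : X) (y : Resp V T) :
    pARM X V T (Mmap X V T r) x y
      = Real.exp (Rr X V T r (x, y)
          - Vq X V T (Mmap X V T r) (x, ⟨⟨0, hT⟩, Fin.elim0⟩)) := by
  have hτT : (y.1 : ℕ) < T := y.1.isLt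
  -- EOS step
  have hnone : Mmap X V T r ((x, y), none) = r ((x, y), none) :=
    Mgo_none X V T r x (y.1 : ℕ) y.1.isLt y.2
  -- vocabulary steps
  have hsome : ∀ i : Fin (y.1 : ℕ),
      Mmap X V T r ((x, pref V T y i), some (y.2 i))
        = r ((x, pref V T y i), some (y.2 i)) + Ftel X V T r x y ((i : ℕ) + 1) := by
    intro i
    have hle : (i : ℕ) + 1 ≤ (y.1 : ℕ) := i.isLt
    have hi1T : (i : ℕ) + 1 < T := lt_of_le_of_lt hle hτT
    have h0 : Mmap X V T r ((x, pref V T y i), some (y.2 i))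
        = r ((x, pref V T y i), some (y.2 i)) + Vq X V T (Mmap X V T r)
            (x, ⟨⟨(i : ℕ) + 1, hi1T⟩,
              Fin.snoc (α := fun _ => V) (fun j => y.2 (Fin.castLE i.isLt.le j)) (y.2 i)⟩) :=
      Mgo_some X V T r x (i : ℕ) (lt_trans i.isLt hτT) _ (y.2 i) hi1T
    rw [h0, Ftel, dif_pos hle]
    have hfun : (Fin.snoc (α := fun _ => V) (fun j => y.2 (Fin.castLE i.isLt.le j)) (y.2 i))
        = (fun j : Fin ((i : ℕ) + 1) => y.2 ⟨(j : ℕ), lt_of_lt_of_le j.isLt hle⟩) := by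
      funext j
      by_cases hj : (j : ℕ) < (i : ℕ)
      · rw [snoc_lt V _ _ j hj]
        rfl
      · have hj2 : (j : ℕ) = (i : ℕ) := by omega
        have hlast : j = Fin.last (i : ℕ) := by ext; simpa using hj2
        rw [hlast,
          show Fin.snoc (α := fun _ => V) (fun j' => y.2 (Fin.castLE i.isLt.le j')) (y.2 i)
            (Fin.last (i : ℕ)) = y.2 i from by simp]
        rfl
    rw [hfun]
  have hVy : Vq X V T (Mmap X V T r) (x, y) = Ftel X V T r x y (y.1 : ℕ) := by
    rw [Ftel, dif_pos le_rfl]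
  have hVi : ∀ i : Fin (y.1 : ℕ),
      Vq X V T (Mmap X V T r) (x, pref V T y i) = Ftel X V T r x y (i : ℕ) := by
    intro i
    rw [Ftel, dif_pos i.isLt.le]
    rfl
  have hF0 : Ftel X V T r x y 0
      = Vq X V T (Mmap X V T r) (x, ⟨⟨0, hT⟩, Fin.elim0⟩) := by
    rw [Ftel, dif_pos (Nat.zero_le _)]
    exact congrArg
      (fun f => Vq X V T (Mmap X V T r) (x, ⟨⟨0, lt_of_le_of_lt (Nat.zero_le _) hτT⟩, f⟩))
      (funext fun j => j.elim0)
  rw [pARM_exp]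
  congr 1
  have hsum : ∑ i : Fin (y.1 : ℕ),
      (Mmap X V T r ((x, pref V T y i), some (y.2 i))
        - Vq X V T (Mmap X V T r) (x, pref V T y i))
      = (∑ i : Fin (y.1 : ℕ), r ((x, pref V T y i), some (y.2 i)))
        + (Ftel X V T r x y (y.1 : ℕ) - Ftel X V T r x y 0) := by
    have hterm : ∀ i : Fin (y.1 : ℕ),
        Mmap X V T r ((x, pref V T y i), some (y.2 i))
          - Vq X V T (Mmap X V T r) (x, pref V T y i)
        = r ((x, pref V T y i), some (y.2 i))
          + (Ftel X V T r x y ((i : ℕ) + 1) - Ftel X V T r x y (i : ℕ)) := by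
      intro i
      rw [hsome i, hVi i]
      ring
    rw [Finset.sum_congr rfl fun i _ => hterm i, Finset.sum_add_distrib]
    congr 1
    rw [Fin.sum_univ_eq_sum_range
        (fun n => Ftel X V T r x y (n + 1) - Ftel X V T r x y n) (y.1 : ℕ),
      Finset.sum_range_sub (Ftel X V T r x y)]
  rw [hsum, hnone, hVy, ← hF0]
  have hRr : Rr X V T r (x, y)
      = (∑ i : Fin (y.1 : ℕ), r ((x, pref V T y i), some (y.2 i))) + r ((x, y), none) := rfl
  rw [hRr]
  ring

lemma Aebm_eq (r : Ctx X V T × Option V → ℝ) (hT : 1 ≤ T) (x : X) :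
    Aebm X V T (Rr X V T r) x
      = Vq X V T (Mmap X V T r) (x, ⟨⟨0, hT⟩, Fin.elim0⟩) := by
  have h1 : ∀ y : Resp V T, Real.exp (Rr X V T r (x, y))
      = pARM X V T (Mmap X V T r) x y
        * Real.exp (Vq X V T (Mmap X V T r) (x, ⟨⟨0, hT⟩, Fin.elim0⟩)) := by
    intro y
    rw [telescope X V T r hT x y, ← Real.exp_add]
    ring_nf
  rw [Aebm, Finset.sum_congr rfl fun y _ => h1 y, ← Finset.sum_mul,
    treesum X V T (Mmap X V T r) hT x, one_mul, Real.log_exp]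

lemma dir2 (r : Ctx X V T × Option V → ℝ) (hT : 1 ≤ T) (x : X) (y : Resp V T) :
    lARM X V T (Mmap X V T r) x y = lEBM X V T (Rr X V T r) x y := by
  rw [lARM, lEBM, Aebm_eq X V T r hT x, telescope X V T r hT x y, Real.log_exp]
  ring

lemma Rr_surj : Function.Surjective (Rr X V T) := by
  intro R
  refine ⟨fun p => p.2.elim (R p.1) (fun _ => 0), ?_⟩
  funext p
  rw [Rr]
  simp [Option.elim]

end

/-- **Equivalence of minima.**
For any probability distribution `ρ` over `𝒳 × 𝒴`, the minimal expected negative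
log-likelihood of ARMs over all `q` equals the minimal expected negative
log-likelihood of EBMs over all decomposable rewards `r`, which in turn equals the
minimal expected negative log-likelihood of EBMs over all sequence-level rewards
`R : 𝒳 × 𝒴 → ℝ`. -/
theorem equivalence_of_minima (X V : Type) [Fintype X] [Fintype V] (T : ℕ) (hT : 1 ≤ T)
    (ρ : X × Resp V T → ℝ) (hρ0 : ∀ p, 0 ≤ ρ p) (hρ1 : ∑ p, ρ p = 1) :
    (⨅ q : Ctx X V T × Option V → ℝ, LARM X V T ρ q) =
      (⨅ r : Ctx X V T × Option V → ℝ, LEBM X V T ρ (Rr X V T r)) ∧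
    (⨅ r : Ctx X V T × Option V → ℝ, LEBM X V T ρ (Rr X V T r)) =
      ⨅ R : X × Resp V T → ℝ, LEBM X V T ρ R := by
  constructor
  · have hset : Set.range (fun q => LARM X V T ρ q)
        = Set.range (fun r => LEBM X V T ρ (Rr X V T r)) := by
      ext z
      constructor
      · rintro ⟨q, rfl⟩
        refine ⟨fun p => q p - Vq X V T q p.1, ?_⟩
        simp only [LEBM, LARM]
        exact Finset.sum_congr rfl fun p _ => by rw [dir1 X V T q hT p.1 p.2]
      · rintro ⟨r, rfl⟩
        refine ⟨Mmap X V T r, ?_⟩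
        simp only [LEBM, LARM]
        exact Finset.sum_congr rfl fun p _ => by rw [dir2 X V T r hT p.1 p.2]
    rw [iInf, iInf, hset]
  · have hset : Set.range ((fun R => LEBM X V T ρ R) ∘ Rr X V T)
        = Set.range (fun R => LEBM X V T ρ R) :=
      (Rr_surj X V T).range_comp _
    rw [iInf, iInf,
      show (fun r => LEBM X V T ρ (Rr X V T r))
        = (fun R => LEBM X V T ρ R) ∘ Rr X V T from rfl, hset]
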